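/- Let ι be a finite index type and let p, q : ι → ℝ³ be two families of points such that ‖p a − p b‖ = ‖q a − q b‖ for all a, b ∈ ι. Then there exist a 3×3 real matrix R with Rᵀ R = 1 (i.e., R is orthogonal) and a vector t ∈ ℝ³ such that q a = R (p a) + t for all a ∈ ι. -/

import Mathlib

open scoped Matrix

/-- The action of a 3×3 matrix on a vector of ℝ³ by matrix–vector multiplication
(definitionally `Matrix.mulVec`, regarded as valued in `EuclideanSpace ℝ (Fin 3)`). -/
def matVec (R : Matrix (Fin 3) (Fin 3) ℝ) (x : EuclideanSpace ℝ (Fin 3)) :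
    EuclideanSpace ℝ (Fin 3) :=
  WithLp.toLp 2 (R.mulVec x)

open scoped RealInnerProductSpace

/-- Two finite families of points in ℝ³ with identical pairwise distances are related by a
Euclidean isometry: an orthogonal transformation composed with a translation. -/
theorem exists_orthogonal_translation_of_dist_eq
    {ι : Type*} [Fintype ι]
    (p q : ι → EuclideanSpace ℝ (Fin 3))
    (h : ∀ a b : ι, ‖p a - p b‖ = ‖q a - q b‖) :
    ∃ (R : Matrix (Fin 3) (Fin 3) ℝ) (t : EuclideanSpace ℝ (Fin 3)),
      Rᵀ * R = 1 ∧ ∀ a : ι, q a = matVec R (p a) + t := by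
  classical
  rcases isEmpty_or_nonempty ι with hι | hι
  · exact ⟨1, 0, by simp, fun a => (IsEmpty.false a).elim⟩
  obtain ⟨a₀⟩ := hι
  set v : ι → EuclideanSpace ℝ (Fin 3) := fun a => p a - p a₀ with hv
  set w : ι → EuclideanSpace ℝ (Fin 3) := fun a => q a - q a₀ with hw
  have hn : ∀ a, ‖v a‖ = ‖w a‖ := fun a => h a a₀
  have hd : ∀ a b, ‖v a - v b‖ = ‖w a - w b‖ := by
    intro a b
    show ‖p a - p a₀ - (p b - p a₀)‖ = ‖q a - q a₀ - (q b - q a₀)‖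
    rw [sub_sub_sub_cancel_right, sub_sub_sub_cancel_right]
    exact h a b
  have hinner : ∀ a b, ⟪v a, v b⟫ = ⟪w a, w b⟫ := by
    intro a b
    have h1 := norm_sub_sq_real (v a) (v b)
    have h2 := norm_sub_sq_real (w a) (w b)
    rw [hd a b, hn a, hn b] at h1
    linarith
  set T : (ι → ℝ) →ₗ[ℝ] EuclideanSpace ℝ (Fin 3) := Fintype.linearCombination ℝ v with hT
  set U : (ι → ℝ) →ₗ[ℝ] EuclideanSpace ℝ (Fin 3) := Fintype.linearCombination ℝ w with hU
  have hTU : ∀ x y : ι → ℝ, ⟪T x, T y⟫ = ⟪U x, U y⟫ := by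
    intro x y
    simp only [hT, hU, Fintype.linearCombination_apply, sum_inner, inner_sum,
      real_inner_smul_left, real_inner_smul_right]
    refine Finset.sum_congr rfl fun a _ => Finset.sum_congr rfl fun b _ => ?_
    rw [hinner b a]
  have hnorm : ∀ x : ι → ℝ, ‖T x‖ = ‖U x‖ := by
    intro x
    have h1 : ‖T x‖ ^ 2 = ‖U x‖ ^ 2 := by
      rw [← real_inner_self_eq_norm_sq, ← real_inner_self_eq_norm_sq, hTU]
    nlinarith [norm_nonneg (T x), norm_nonneg (U x)]
  have hker : LinearMap.ker T ≤ LinearMap.ker U := by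
    intro x hx
    simp only [LinearMap.mem_ker] at hx ⊢
    have h1 := hnorm x
    rw [hx, norm_zero] at h1
    exact norm_eq_zero.mp h1.symm
  set F₀ : ((ι → ℝ) ⧸ LinearMap.ker T) →ₗ[ℝ] EuclideanSpace ℝ (Fin 3) :=
    (LinearMap.ker T).liftQ U hker with hF₀
  set F₁ : ↥(LinearMap.range T) →ₗ[ℝ] EuclideanSpace ℝ (Fin 3) :=
    F₀ ∘ₗ (T.quotKerEquivRange.symm : ↥(LinearMap.range T) →ₗ[ℝ] _) with hF₁
  have hF₁T : ∀ x : ι → ℝ, F₁ ⟨T x, LinearMap.mem_range_self T x⟩ = U x := by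
    intro x
    have h1 : T.quotKerEquivRange (Submodule.Quotient.mk x) = ⟨T x, LinearMap.mem_range_self T x⟩ :=
      Subtype.ext (T.quotKerEquivRange_apply_mk x)
    simp only [hF₁, LinearMap.coe_comp, Function.comp_apply, LinearEquiv.coe_coe, ← h1,
      LinearEquiv.symm_apply_apply, hF₀, Submodule.liftQ_apply]
  set F : ↥(LinearMap.range T) →ₗᵢ[ℝ] EuclideanSpace ℝ (Fin 3) :=
    { toLinearMap := F₁
      norm_map' := by
        rintro ⟨z, x, rfl⟩
        rw [hF₁T x]
        simpa using (hnorm x).symm } with hF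
  set G := F.extend with hG
  have hGv : ∀ a, G (v a) = w a := by
    intro a
    have h1 : T (Pi.single a 1) = v a := by
      simp [hT, Fintype.linearCombination_apply, Pi.single_apply, ite_smul]
    have h2 : U (Pi.single a 1) = w a := by
      simp [hU, Fintype.linearCombination_apply, Pi.single_apply, ite_smul]
    have hmem : v a ∈ LinearMap.range T := ⟨Pi.single a 1, h1⟩
    have h3 := F.extend_apply ⟨v a, hmem⟩
    rw [show ((⟨v a, hmem⟩ : ↥(LinearMap.range T)) : EuclideanSpace ℝ (Fin 3)) = v a from rfl] at h3
    rw [h3, hF]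
    show F₁ ⟨v a, hmem⟩ = w a
    have h4 : (⟨v a, hmem⟩ : ↥(LinearMap.range T))
        = ⟨T (Pi.single a 1), LinearMap.mem_range_self T _⟩ := by
      exact Subtype.ext h1.symm
    rw [h4, hF₁T, h2]
  set R : Matrix (Fin 3) (Fin 3) ℝ :=
    Matrix.of (fun i j => G (EuclideanSpace.single j 1) i) with hR
  have hRmul : ∀ x : EuclideanSpace ℝ (Fin 3), matVec R x = G x := by
    intro x
    have hx : x = ∑ j, x j • (EuclideanSpace.single j (1:ℝ)) := by
      apply PiLp.ext; intro i
      have hs : (∑ j, x j • EuclideanSpace.single j (1:ℝ)) i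
          = ∑ j, (x j • EuclideanSpace.single j (1:ℝ) : EuclideanSpace ℝ (Fin 3)) i :=
        by rw [WithLp.ofLp_sum]; exact Finset.sum_apply i Finset.univ _
      rw [hs]
      simp [EuclideanSpace.single_apply, smul_eq_mul, mul_ite]
    apply PiLp.ext; intro i
    conv_rhs => rw [hx]
    simp only [map_sum, map_smul]
    show ∑ j, R i j * x j = _
    have hs : (∑ j, x j • G (EuclideanSpace.single j (1:ℝ))) i
        = ∑ j, (x j • G (EuclideanSpace.single j (1:ℝ)) : EuclideanSpace ℝ (Fin 3)) i :=
      by rw [WithLp.ofLp_sum]; exact Finset.sum_apply i Finset.univ _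
    rw [hs]
    exact Finset.sum_congr rfl fun j _ => mul_comm _ _
  refine ⟨R, q a₀ - matVec R (p a₀), ?_, ?_⟩
  · ext i j
    have h5 : (Rᵀ * R) i j
        = ∑ k, G (EuclideanSpace.single i 1) k * G (EuclideanSpace.single j 1) k := by
      simp [Matrix.mul_apply, hR]
    have h6 : ⟪G (EuclideanSpace.single i (1:ℝ)), G (EuclideanSpace.single j 1)⟫
        = ∑ k, G (EuclideanSpace.single i 1) k * G (EuclideanSpace.single j 1) k := by
      rw [PiLp.inner_apply]
      exact Finset.sum_congr rfl fun k _ => by simp [RCLike.inner_apply]; ring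
    have hin : ⟪G (EuclideanSpace.single i (1:ℝ)), G (EuclideanSpace.single j 1)⟫ =
        ⟪(EuclideanSpace.single i (1:ℝ) : EuclideanSpace ℝ (Fin 3)), EuclideanSpace.single j 1⟫ :=
      G.inner_map_map _ _
    rw [h5, ← h6, hin]
    simp [EuclideanSpace.inner_single_left, EuclideanSpace.single_apply, Matrix.one_apply, eq_comm]
  · intro a
    have h7 : q a = w a + q a₀ := by simp [hw]
    rw [h7, ← hGv a, ← hRmul]
    show matVec R (p a - p a₀) + q a₀ = matVec R (p a) + (q a₀ - matVec R (p a₀))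
    have h8 : matVec R (p a - p a₀) = matVec R (p a) - matVec R (p a₀) := by
      rw [hRmul, hRmul, hRmul, map_sub]
    rw [h8]; abel
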